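/- Let Γ' be a 2n×2n real matrix that is asymptotically stable with Γ' + Γ'ᵀ negative semidefinite, let α > 0, and let S be a real symplectic matrix (S·J·Sᵀ = J). Set Γ_p := S·Γ'·S⁻¹ and D_p := −α·S·(Γ' + Γ'ᵀ)·Sᵀ. Then Γ_p is asymptotically stable, D_p is positive semidefinite, and the unique solution of the Lyapunov equation Γ_p·V + V·Γ_pᵀ + D_p = 0 is V = α·S·Sᵀ. -/

import Mathlib

open MeasureTheory NormedSpace Matrix

attribute [local instance] Matrix.normedAddCommGroup Matrix.normedSpace

noncomputable def symplecticJ (n : ℕ) : Matrix (Fin n ⊕ Fin n) (Fin n ⊕ Fin n) ℝ :=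
  Matrix.fromBlocks 0 1 (-1) 0

def IsAsymptoticallyStable {m : Type*} [Fintype m] [DecidableEq m]
    (Γ : Matrix m m ℝ) : Prop :=
  ∀ μ ∈ spectrum ℂ (Γ.map Complex.ofReal), μ.re < 0

/-!
A symplectic `S` is invertible, so `Γₚ = S Γ' S⁻¹` has the spectrum of `Γ'`, and
`Dₚ = α S (-(Γ' + Γ'ᵀ)) Sᵀ` is congruent to a positive semidefinite matrix; a direct computation
gives `Γₚ (S Sᵀ) + (S Sᵀ) Γₚᵀ = S (Γ' + Γ'ᵀ) Sᵀ`, i.e. `V = α S Sᵀ` solves `Γₚ V + V Γₚᵀ + Dₚ = 0`.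

For an asymptotically stable `Γ` and `Γ V + V Γᵀ + D = 0`, the spectrum of `exp Γ` lies in
`exp (σ Γ)`, inside the open unit disc, so Gelfand's formula makes `‖exp (t Γ)‖` decay
exponentially. The curve `t ↦ exp (t Γ) V exp (t Γᵀ)` has derivative `-exp (t Γ) D exp (t Γᵀ)`,
starts at `V` and tends to `0`, so the fundamental theorem of calculus on `[0, ∞)` identifies
the integral with `V`.
-/

open Filter Topology Set

section BanachAlgebra

variable {A : Type*} [NormedRing A] [NormedAlgebra ℂ A] [CompleteSpace A]

theorem exists_norm_pow_le_of_spectralRadius_lt {a : A} {r : NNReal}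
    (h : spectralRadius ℂ a < r) : ∃ C, ∀ k : ℕ, ‖a ^ k‖ ≤ C * r ^ k := by
  have hr : 0 < (r : ℝ) := by exact_mod_cast ENNReal.coe_pos.1 (zero_le.trans_lt h)
  have hev : ∀ᶠ k : ℕ in atTop, ‖a ^ k‖ / r ^ k ≤ 1 := by
    filter_upwards [(spectrum.pow_nnnorm_pow_one_div_tendsto_nhds_spectralRadius a).eventually
      (gt_mem_nhds h), eventually_ne_atTop 0] with k hk hk0
    rw [one_div, ← ENNReal.coe_rpow_of_nonneg _ (by positivity), ENNReal.coe_lt_coe,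
      ← NNReal.coe_lt_coe, NNReal.coe_rpow, coe_nnnorm] at hk
    rw [div_le_one (by positivity), ← Real.rpow_inv_natCast_pow (norm_nonneg (a ^ k)) hk0]
    exact pow_le_pow_left₀ (by positivity) hk.le k
  obtain ⟨C, hC⟩ :=
    (isBoundedUnder_of_eventually_le (Nat.cofinite_eq_atTop ▸ hev)).bddAbove_range_of_cofinite
  exact ⟨C, fun k => (div_le_iff₀ (by positivity)).1 (hC ⟨k, rfl⟩)⟩

theorem spectralRadius_lt_one_of_forall_norm_lt_one {a : A}
    (h : ∀ μ ∈ spectrum ℂ a, ‖μ‖ < 1) : spectralRadius ℂ a < 1 := by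
  rcases (spectrum ℂ a).eq_empty_or_nonempty with hempty | hne
  · simp [spectralRadius, hempty]
  · exact_mod_cast spectrum.spectralRadius_lt_of_forall_lt_of_nonempty hne
      (r := 1) fun μ hμ => by exact_mod_cast h μ hμ

theorem exists_norm_exp_smul_le_of_forall_norm_lt_one {a : A}
    (h : ∀ μ ∈ spectrum ℂ (exp a), ‖μ‖ < 1) :
    ∃ C c : ℝ, 0 < c ∧ ∀ t : ℝ, 0 ≤ t → ‖exp ((t : ℂ) • a)‖ ≤ C * Real.exp (-c * t) := by
  -- `exp` does not depend on the choice of `ℚ`-algebra structure, but the lemmas about it need one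
  let : NormedAlgebra ℚ A := NormedAlgebra.restrictScalars ℚ ℂ A
  obtain ⟨r, hρr, hr1⟩ :=
    ENNReal.lt_iff_exists_nnreal_btwn.1 (spectralRadius_lt_one_of_forall_norm_lt_one h)
  have hr0 : 0 < (r : ℝ) := by exact_mod_cast ENNReal.coe_pos.1 (zero_le.trans_lt hρr)
  replace hr1 : (r : ℝ) < 1 := by exact_mod_cast hr1
  obtain ⟨C, hC⟩ := exists_norm_pow_le_of_spectralRadius_lt hρr
  have hcont : Continuous fun s : ℝ => exp ((s : ℂ) • a) :=
    exp_continuous.comp (Complex.continuous_ofReal.smul continuous_const)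
  obtain ⟨B, hB⟩ := (isCompact_Icc (a := (0 : ℝ)) (b := 1)).exists_bound_of_continuousOn
    hcont.continuousOn
  have hC0 : 0 ≤ C := by simpa using (norm_nonneg _).trans (hC 0)
  have hB0 : 0 ≤ B := (norm_nonneg _).trans (hB 0 ⟨le_rfl, zero_le_one⟩)
  set c := -Real.log r
  have hc : 0 < c := neg_pos.2 (Real.log_neg hr0 hr1)
  have hrc : (r : ℝ) = Real.exp (-c) := by simp [c, Real.exp_log hr0]
  refine ⟨C * B * Real.exp c, c, hc, fun t ht => ?_⟩
  -- the integer part of `t` is controlled by Gelfand's formula, the rest by compactness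
  set k := ⌊t⌋₊
  have hsplit : exp ((t : ℂ) • a) = exp a ^ k * exp (((t - k : ℝ) : ℂ) • a) := by
    rw [← NormedSpace.exp_nsmul,
      ← NormedSpace.exp_add_of_commute ((Commute.refl a).smul_left _ |>.smul_right _),
      ← Nat.cast_smul_eq_nsmul ℂ, ← add_smul]
    push_cast; ring_nf
  have hk : (t - 1) ≤ k := by linarith [Nat.lt_floor_add_one t]
  calc ‖exp ((t : ℂ) • a)‖ ≤ (C * r ^ k) * B := by
        rw [hsplit]
        refine (norm_mul_le _ _).trans (mul_le_mul (hC k) (hB _ ⟨?_, ?_⟩) (norm_nonneg _) ?_)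
        · linarith [Nat.floor_le ht]
        · linarith
        · positivity
    _ = C * B * Real.exp (-c * k) := by rw [hrc, ← Real.exp_nat_mul]; ring_nf
    _ ≤ C * B * Real.exp c * Real.exp (-c * t) := by
        rw [mul_assoc _ (Real.exp c), ← Real.exp_add]
        gcongr
        nlinarith

end BanachAlgebra

namespace Matrix

variable {m : Type*} [Fintype m]

-- The ambient entrywise sup norm is not submultiplicative, so Banach-algebra facts about `exp`
-- are used through the operator norm of `Matrix.Norms.Operator`, which has the same topology.
theorem norm_le_linfty_opNorm {n α : Type*} [Fintype n] [NormedAddCommGroup α]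
    (A : Matrix m n α) : ‖A‖ ≤ open scoped Norms.Operator in ‖A‖ := by
  open scoped Norms.Operator in
  refine (norm_le_iff (norm_nonneg _)).2 fun i j => ?_
  rw [linfty_opNorm_def]
  calc ‖A i j‖ ≤ ∑ k, ‖A i k‖ :=
        Finset.single_le_sum (fun k _ => norm_nonneg (A i k)) (Finset.mem_univ j)
    _ = ((∑ k, ‖A i k‖₊ : NNReal) : ℝ) := by push_cast; rfl
    _ ≤ _ := NNReal.coe_le_coe.2 (Finset.le_sup (f := fun i => ∑ k, ‖A i k‖₊) (Finset.mem_univ i))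

theorem norm_mul_le_card_mul {l n α : Type*} [Fintype n] [Fintype l] [NormedRing α]
    (A : Matrix l m α) (B : Matrix m n α) : ‖A * B‖ ≤ Fintype.card m * ‖A‖ * ‖B‖ := by
  refine (norm_le_iff (by positivity)).2 fun i j => ?_
  calc ‖(A * B) i j‖ ≤ ∑ k, ‖A i k‖ * ‖B k j‖ :=
        (norm_sum_le _ _).trans (Finset.sum_le_sum fun k _ => norm_mul_le _ _)
    _ ≤ ∑ _k : m, ‖A‖ * ‖B‖ := by
        gcongr with k
        exacts [norm_entry_le_entrywise_sup_norm A, norm_entry_le_entrywise_sup_norm B]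
    _ = Fintype.card m * ‖A‖ * ‖B‖ := by simp [mul_assoc]

variable [DecidableEq m]

theorem lyapunov_conj_mul_transpose {R : Type*} [CommRing R] {S Γ : Matrix m m R}
    (hS : IsUnit S.det) :
    S * Γ * S⁻¹ * (S * Sᵀ) + S * Sᵀ * (S * Γ * S⁻¹)ᵀ = S * (Γ + Γᵀ) * Sᵀ := by
  have h : S⁻¹ * S = 1 := S.nonsing_inv_mul hS
  have hT : Sᵀ * S⁻¹ᵀ = 1 := by rw [← transpose_mul, h, transpose_one]
  simp only [transpose_mul, Matrix.mul_assoc, mul_add, add_mul]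
  rw [← Matrix.mul_assoc S⁻¹, h, Matrix.one_mul, ← Matrix.mul_assoc Sᵀ, hT, Matrix.one_mul]

theorem exp_mulVec_of_mulVec_eq_smul {M : Matrix m m ℂ} {μ : ℂ} {v : m → ℂ}
    (hv : M *ᵥ v = μ • v) : exp M *ᵥ v = Complex.exp μ • v := by
  have hpow : ∀ k : ℕ, M ^ k *ᵥ v = μ ^ k • v := by
    intro k
    induction k with
    | zero => simp
    | succ k ih => rw [pow_succ', ← mulVec_mulVec, ih, mulVec_smul, hv, smul_smul, pow_succ]
  have hM := open scoped Norms.Operator in exp_series_hasSum_exp' (𝕂 := ℂ) M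
  have hμ := (exp_series_hasSum_exp' (𝕂 := ℂ) μ).smul_const v
  rw [Complex.exp_eq_exp_ℂ]
  refine (hM.map (mulVec.addMonoidHomLeft v)
    (continuous_id.matrix_mulVec continuous_const)).unique ?_
  convert hμ using 1
  funext k
  change ((k.factorial : ℂ)⁻¹ • M ^ k) *ᵥ v = _
  rw [smul_mulVec, hpow, smul_smul, smul_eq_mul]

theorem spectrum_exp_subset (M : Matrix m m ℂ) :
    spectrum ℂ (exp M) ⊆ Complex.exp '' spectrum ℂ M := by
  intro μ hμ
  set f : Module.End ℂ (m → ℂ) := toLin' M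
  set g : Module.End ℂ (m → ℂ) := toLin' (exp M)
  have hcomm : Commute g f := ((Commute.refl M).exp_left).map toLinAlgEquiv'
  have hμg : g.HasEigenvalue μ := by
    rwa [Module.End.hasEigenvalue_iff_mem_spectrum, spectrum_toLin']
  -- `f` preserves the `μ`-eigenspace of `g`, so it has an eigenvector there
  have : Nontrivial (g.eigenspace μ) := Submodule.nontrivial_iff_ne_bot.2 hμg
  obtain ⟨lam, hlam⟩ :=
    Module.End.exists_eigenvalue (f.restrict (Module.End.mapsTo_genEigenspace_of_comm hcomm μ 1))
  obtain ⟨⟨w, hwμ⟩, hw⟩ := hlam.exists_hasEigenvector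
  have hw0 : w ≠ 0 := fun h => hw.2 (by simp [h])
  have hfw : M *ᵥ w = lam • w := congrArg Subtype.val hw.apply_eq_smul
  have hgw : exp M *ᵥ w = μ • w := Module.End.mem_eigenspace_iff.1 hwμ
  refine ⟨lam, ?_, smul_left_injective ℂ hw0 ?_⟩
  · rw [← spectrum_toLin', ← Module.End.hasEigenvalue_iff_mem_spectrum]
    exact Module.End.hasEigenvalue_of_hasEigenvector ⟨Module.End.mem_eigenspace_iff.2 hfw, hw0⟩
  · change Complex.exp lam • w = μ • w
    rw [← exp_mulVec_of_mulVec_eq_smul hfw, hgw]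

theorem hasDerivAt_exp_smul_mul_mul_exp_smul (A B X : Matrix m m ℝ) (t : ℝ) :
    HasDerivAt (fun u : ℝ => exp (u • A) * X * exp (u • B))
      (exp (t • A) * (A * X + X * B) * exp (t • B)) t := by
  have h : HasDerivAt (fun u : ℝ => exp (u • A) * X * exp (u • B))
      (exp (t • A) * A * X * exp (t • B) + exp (t • A) * X * (B * exp (t • B))) t :=
    open scoped Norms.Operator in
    ((hasDerivAt_exp_smul_const A t).mul_const X).mul (hasDerivAt_exp_smul_const' B t)
  refine h.congr_deriv ?_
  simp only [mul_add, add_mul, mul_assoc]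

end Matrix

namespace IsAsymptoticallyStable

variable {m : Type*} [Fintype m] [DecidableEq m] {Γ : Matrix m m ℝ}

theorem conj {S : Matrix m m ℝ} (hS : IsUnit S.det) (hΓ : IsAsymptoticallyStable Γ) :
    IsAsymptoticallyStable (S * Γ * S⁻¹) := by
  obtain ⟨u, rfl⟩ := (Matrix.isUnit_iff_isUnit_det S).2 hS
  let u' := Units.map (Complex.ofRealHom.mapMatrix (m := m)).toMonoidHom u
  have hmap : ((u : Matrix m m ℝ) * Γ * (u : Matrix m m ℝ)⁻¹).map Complex.ofReal =
      (u' : Matrix m m ℂ) * Γ.map Complex.ofReal * ((u'⁻¹ : (Matrix m m ℂ)ˣ) : Matrix m m ℂ) := by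
    rw [← Matrix.coe_units_inv]
    change Complex.ofRealHom.mapMatrix (_ * _ * _) = _
    rw [map_mul, map_mul]
    rfl
  intro μ hμ
  rw [hmap, spectrum.units_conjugate] at hμ
  exact hΓ μ hμ

theorem norm_lt_one_of_mem_spectrum_exp (hΓ : IsAsymptoticallyStable Γ) {μ : ℂ}
    (hμ : μ ∈ spectrum ℂ (exp (Γ.map Complex.ofReal))) : ‖μ‖ < 1 := by
  obtain ⟨lam, hlam, rfl⟩ := Matrix.spectrum_exp_subset _ hμ
  rw [Complex.norm_exp, Real.exp_lt_one_iff]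
  exact hΓ lam hlam

theorem exists_norm_exp_smul_le (hΓ : IsAsymptoticallyStable Γ) :
    ∃ C c : ℝ, 0 < c ∧ ∀ t : ℝ, 0 ≤ t → ‖exp (t • Γ)‖ ≤ C * Real.exp (-c * t) := by
  obtain ⟨C, c, hc, hbound⟩ := open scoped Matrix.Norms.Operator in
    exists_norm_exp_smul_le_of_forall_norm_lt_one fun _ => hΓ.norm_lt_one_of_mem_spectrum_exp
  refine ⟨C, c, hc, fun t ht => ?_⟩
  have hmap : (exp (t • Γ)).map Complex.ofReal = exp ((t : ℂ) • Γ.map Complex.ofReal) := by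
    have h : Complex.ofRealHom.mapMatrix (exp (t • Γ)) =
        exp (Complex.ofRealHom.mapMatrix (t • Γ)) :=
      open scoped Matrix.Norms.Operator in
      map_exp _ (continuous_id.matrix_map Complex.continuous_ofReal) _
    convert h using 2 <;> ext <;> simp
  calc ‖exp (t • Γ)‖ = ‖(exp (t • Γ)).map Complex.ofReal‖ :=
        (norm_map_eq _ _ Complex.norm_real).symm
    _ ≤ C * Real.exp (-c * t) := by
        rw [hmap]
        exact (Matrix.norm_le_linfty_opNorm _).trans (hbound t ht)

theorem exists_norm_exp_smul_mul_mul_exp_smul_transpose_le (hΓ : IsAsymptoticallyStable Γ)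
    (X : Matrix m m ℝ) : ∃ K c : ℝ, 0 < c ∧ ∀ t : ℝ, 0 ≤ t →
      ‖exp (t • Γ) * X * exp (t • Γᵀ)‖ ≤ K * Real.exp (-c * t) := by
  obtain ⟨C, c, hc, hE⟩ := hΓ.exists_norm_exp_smul_le
  set N : ℝ := (Fintype.card m : ℝ)
  refine ⟨N ^ 2 * ‖X‖ * C ^ 2, 2 * c, by positivity, fun t ht => ?_⟩
  have hEt : ‖exp (t • Γᵀ)‖ = ‖exp (t • Γ)‖ := by
    rw [← Matrix.transpose_smul, Matrix.exp_transpose, Matrix.norm_transpose]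
  calc ‖exp (t • Γ) * X * exp (t • Γᵀ)‖
      ≤ N * (N * ‖exp (t • Γ)‖ * ‖X‖) * ‖exp (t • Γᵀ)‖ :=
        (Matrix.norm_mul_le_card_mul _ _).trans
          (by gcongr; exact Matrix.norm_mul_le_card_mul (exp (t • Γ)) X)
    _ = N ^ 2 * ‖X‖ * (‖exp (t • Γ)‖ * ‖exp (t • Γ)‖) := by rw [hEt]; ring
    _ ≤ N ^ 2 * ‖X‖ * ((C * Real.exp (-c * t)) * (C * Real.exp (-c * t))) :=
        mul_le_mul_of_nonneg_left (mul_self_le_mul_self (norm_nonneg _) (hE t ht)) (by positivity)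
    _ = N ^ 2 * ‖X‖ * C ^ 2 * Real.exp (-(2 * c) * t) := by
        rw [show -(2 * c) * t = -c * t + -c * t by ring, Real.exp_add]
        ring

theorem tendsto_exp_smul_mul_mul_exp_smul_transpose (hΓ : IsAsymptoticallyStable Γ)
    (X : Matrix m m ℝ) :
    Tendsto (fun t : ℝ => exp (t • Γ) * X * exp (t • Γᵀ)) atTop (𝓝 0) := by
  obtain ⟨K, c, hc, hbound⟩ := hΓ.exists_norm_exp_smul_mul_mul_exp_smul_transpose_le X
  refine squeeze_zero_norm' ((eventually_ge_atTop 0).mono hbound) ?_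
  simpa using (Real.tendsto_exp_atBot.comp
    (tendsto_id.const_mul_atTop_of_neg (neg_lt_zero.2 hc))).const_mul K

theorem integral_exp_smul_mul_mul_exp_smul_transpose (hΓ : IsAsymptoticallyStable Γ)
    {V D : Matrix m m ℝ} (hV : Γ * V + V * Γᵀ + D = 0) :
    ∫ t in Ici (0 : ℝ), exp (t • Γ) * D * exp (t • Γᵀ) = V := by
  have hD : Γ * V + V * Γᵀ = -D := eq_neg_of_add_eq_zero_left hV
  have hderiv (t : ℝ) : HasDerivAt (fun u : ℝ => exp (u • Γ) * V * exp (u • Γᵀ))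
      (-(exp (t • Γ) * D * exp (t • Γᵀ))) t := by
    simpa [hD] using Matrix.hasDerivAt_exp_smul_mul_mul_exp_smul Γ Γᵀ V t
  obtain ⟨K, c, hc, hbound⟩ := hΓ.exists_norm_exp_smul_mul_mul_exp_smul_transpose_le D
  have hcont : Continuous fun t : ℝ => exp (t • Γ) * D * exp (t • Γᵀ) :=
    continuous_iff_continuousAt.2 fun t =>
      (Matrix.hasDerivAt_exp_smul_mul_mul_exp_smul Γ Γᵀ D t).continuousAt
  rw [integral_Ici_eq_integral_Ioi, ← neg_neg (∫ t in Ioi (0 : ℝ), _), ← integral_neg,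
    integral_Ioi_of_hasDerivAt_of_tendsto (hderiv 0).continuousAt.continuousWithinAt
      (fun t _ => hderiv t) ?_ (hΓ.tendsto_exp_smul_mul_mul_exp_smul_transpose V)]
  · simp
  refine (Integrable.mono' ((exp_neg_integrableOn_Ioi 0 hc).const_mul K) ?_ ?_).neg
  · apply Continuous.aestronglyMeasurable
    exact hcont
  · filter_upwards [ae_restrict_mem measurableSet_Ioi] with t ht using hbound t (le_of_lt ht)

end IsAsymptoticallyStable

theorem symplecticJ_eq_neg_J (n : ℕ) : symplecticJ n = -Matrix.J (Fin n) ℝ := by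
  simp [symplecticJ, Matrix.J, Matrix.fromBlocks_neg]

theorem mem_symplecticGroup_iff_mul_symplecticJ_mul_transpose {n : ℕ}
    {S : Matrix (Fin n ⊕ Fin n) (Fin n ⊕ Fin n) ℝ} :
    S ∈ Matrix.symplecticGroup (Fin n) ℝ ↔ S * symplecticJ n * Sᵀ = symplecticJ n := by
  simp [SymplecticGroup.mem_iff, symplecticJ_eq_neg_J]

/-- For `Γ'` asymptotically stable with `Γ' + Γ'ᵀ ≤ 0`, `α > 0`, and `S` symplectic,
the matrices `Γₚ = S Γ' S⁻¹` and `Dₚ = −α S (Γ' + Γ'ᵀ) Sᵀ` satisfy: `Γₚ` is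
asymptotically stable, `Dₚ` is positive semidefinite, and the unique solution of the
Lyapunov equation `Γₚ V + V Γₚᵀ + Dₚ = 0` is `V = α S Sᵀ`. -/
theorem engineered_lyapunov_solution (n : ℕ)
    (Γ' S : Matrix (Fin n ⊕ Fin n) (Fin n ⊕ Fin n) ℝ) (α : ℝ)
    (hΓ' : IsAsymptoticallyStable Γ') (hneg : (-(Γ' + Γ'ᵀ)).PosSemidef) (hα : 0 < α)
    (hS : S * symplecticJ n * Sᵀ = symplecticJ n) :
    IsAsymptoticallyStable (S * Γ' * S⁻¹) ∧
      (-α • (S * (Γ' + Γ'ᵀ) * Sᵀ)).PosSemidef ∧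
      (∫ t in Set.Ici (0 : ℝ),
          exp (t • (S * Γ' * S⁻¹)) * (-α • (S * (Γ' + Γ'ᵀ) * Sᵀ)) *
            exp (t • (S * Γ' * S⁻¹)ᵀ)) = α • (S * Sᵀ) := by
  have hS' : IsUnit S.det := SymplecticGroup.symplectic_det
    (mem_symplecticGroup_iff_mul_symplecticJ_mul_transpose.2 hS)
  refine ⟨hΓ'.conj hS', ?_, (hΓ'.conj hS').integral_exp_smul_mul_mul_exp_smul_transpose ?_⟩
  · rw [neg_smul, ← smul_neg, ← Matrix.neg_mul, ← Matrix.mul_neg,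
      ← Matrix.conjTranspose_eq_transpose_of_trivial]
    exact (hneg.mul_mul_conjTranspose_same S).smul hα.le
  · rw [Matrix.mul_smul, Matrix.smul_mul, ← smul_add, Matrix.lyapunov_conj_mul_transpose hS',
      neg_smul, add_neg_cancel]
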